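/- Let p₁₁, p₁₂, p₂₁, p₂₂ ∈ [0, 1/2]. There exists a probability distribution on ({−1,+1})⁴, viewed as the joint distribution of random variables (H¹₁, H¹₂, H²₁, H²₂), such that Pr[H¹ᵢ = +1] = Pr[H²ⱼ = +1] = 1/2 and Pr[H¹ᵢ = +1, H²ⱼ = +1] = pᵢⱼ for all i, j ∈ {1,2}, if and only if for every choice of i ≠ i′ and j ≠ j′ in {1,2} one has 0 ≤ pᵢⱼ + pᵢⱼ′ + pᵢ′ⱼ′ − pᵢ′ⱼ ≤ 1 (the homogeneous Bell/CHSH inequalities). -/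
import Mathlib

def tupEquiv : (Fin 2 → Fin 2 → Bool) ≃ (Bool × Bool × Bool × Bool) where
  toFun h := (h 0 0, h 0 1, h 1 0, h 1 1)
  invFun t := fun i j =>
    if i = 0 then (if j = 0 then t.1 else t.2.1) else (if j = 0 then t.2.2.1 else t.2.2.2)
  left_inv h := by
    funext i j; fin_cases i <;> fin_cases j <;> simp
  right_inv t := by simp

lemma sum_expand (f : (Fin 2 → Fin 2 → Bool) → ℝ) :
    ∑ h : Fin 2 → Fin 2 → Bool, f h =
      ∑ a : Bool, ∑ b : Bool, ∑ c : Bool, ∑ d : Bool,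
        f (fun i j => if i = 0 then (if j = 0 then a else b) else (if j = 0 then c else d)) := by
  rw [← Equiv.sum_comp tupEquiv.symm f]
  simp [Fintype.sum_prod_type, tupEquiv]

noncomputable def sgn (b : Bool) : ℝ := if b then 1 else -1

noncomputable def bellU (p : Fin 2 → Fin 2 → ℝ) : ℝ :=
  (|4*(p 0 0 + p 0 1 + p 1 0 + p 1 1) - 4| + |4*(p 0 0 - p 0 1 + p 1 0 - p 1 1)|
    - |4*(p 0 0 + p 0 1 - p 1 0 - p 1 1)| - |4*(p 0 0 - p 0 1 - p 1 0 + p 1 1)|)/4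

noncomputable def bellV (p : Fin 2 → Fin 2 → ℝ) : ℝ :=
  (|4*(p 0 0 + p 0 1 + p 1 0 + p 1 1) - 4| + |4*(p 0 0 + p 0 1 - p 1 0 - p 1 1)|
    - |4*(p 0 0 - p 0 1 + p 1 0 - p 1 1)| - |4*(p 0 0 - p 0 1 - p 1 0 + p 1 1)|)/4

noncomputable def bellW (p : Fin 2 → Fin 2 → ℝ) : ℝ :=
  (|4*(p 0 0 + p 0 1 + p 1 0 + p 1 1) - 4| + |4*(p 0 0 - p 0 1 - p 1 0 + p 1 1)|
    - |4*(p 0 0 - p 0 1 + p 1 0 - p 1 1)| - |4*(p 0 0 + p 0 1 - p 1 0 - p 1 1)|)/4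

noncomputable def bellMu (p : Fin 2 → Fin 2 → ℝ) (h : Fin 2 → Fin 2 → Bool) : ℝ :=
  (1/16) * (1
    + (4*p 0 0 - 1) * sgn (h 0 0) * sgn (h 1 0)
    + (4*p 0 1 - 1) * sgn (h 0 0) * sgn (h 1 1)
    + (4*p 1 0 - 1) * sgn (h 0 1) * sgn (h 1 0)
    + (4*p 1 1 - 1) * sgn (h 0 1) * sgn (h 1 1)
    + bellU p * sgn (h 0 0) * sgn (h 0 1)
    + bellV p * sgn (h 1 0) * sgn (h 1 1)
    + bellW p * sgn (h 0 0) * sgn (h 0 1) * sgn (h 1 0) * sgn (h 1 1))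

set_option maxHeartbeats 1000000 in
/-- For `p i j ∈ [0, 1/2]`, a joint distribution on `({-1,+1})⁴` (here encoded
as functions `Fin 2 → Fin 2 → Bool`, `h k i` being the value of `Hᵏᵢ`, `true` standing for `+1`)
with uniform ±1 marginals and `Pr[H¹ᵢ = +1, H²ⱼ = +1] = p i j` exists if and only if the
homogeneous Bell/CHSH inequalities hold. -/
theorem bell_chsh_homogeneous
    (p : Fin 2 → Fin 2 → ℝ)
    (hp : ∀ i j, p i j ∈ Set.Icc (0 : ℝ) (1 / 2)) :
    (∃ μ : (Fin 2 → Fin 2 → Bool) → ℝ,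
      (∀ h, 0 ≤ μ h) ∧
      (∑ h : Fin 2 → Fin 2 → Bool, μ h = 1) ∧
      (∀ k i : Fin 2,
        ∑ h ∈ Finset.univ.filter (fun h : Fin 2 → Fin 2 → Bool => h k i = true), μ h = 1 / 2) ∧
      (∀ i j : Fin 2,
        ∑ h ∈ Finset.univ.filter
            (fun h : Fin 2 → Fin 2 → Bool => h 0 i = true ∧ h 1 j = true), μ h = p i j)) ↔
    (∀ i i' j j' : Fin 2, i ≠ i' → j ≠ j' →
      0 ≤ p i j + p i j' + p i' j' - p i' j ∧ p i j + p i j' + p i' j' - p i' j ≤ 1) := by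
  constructor
  · rintro ⟨μ, hpos, hnorm, hmarg, hpair⟩
    have h00 := hpair 0 0; have h01 := hpair 0 1; have h10 := hpair 1 0; have h11 := hpair 1 1
    have m00 := hmarg 0 0; have m01 := hmarg 0 1; have m10 := hmarg 1 0; have m11 := hmarg 1 1
    rw [Finset.sum_filter, sum_expand] at h00 h01 h10 h11 m00 m01 m10 m11
    rw [sum_expand] at hnorm
    simp only [Fintype.sum_bool] at h00 h01 h10 h11 m00 m01 m10 m11 hnorm
    norm_num at h00 h01 h10 h11 m00 m01 m10 m11 hnorm
    have P := fun (a b c d : Bool) =>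
      hpos (fun i j => if i = 0 then (if j = 0 then a else b) else (if j = 0 then c else d))
    have P1 := P true true true true
    have P2 := P true true true false
    have P3 := P true true false true
    have P4 := P true true false false
    have P5 := P true false true true
    have P6 := P true false true false
    have P7 := P true false false true
    have P8 := P true false false false
    have P9 := P false true true true
    have P10 := P false true true false
    have P11 := P false true false true
    have P12 := P false true false false
    have P13 := P false false true true
    have P14 := P false false true false
    have P15 := P false false false true
    have P16 := P false false false false
    norm_num at P1 P2 P3 P4 P5 P6 P7 P8 P9 P10 P11 P12 P13 P14 P15 P16
    intro i i' j j' hii hjj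
    fin_cases i <;> fin_cases i' <;> fin_cases j <;> fin_cases j' <;>
      first
      | exact absurd rfl hii
      | exact absurd rfl hjj
      | (norm_num
         constructor <;>
          linarith [hnorm,P1,P2,P3,P4,P5,P6,P7,P8,P9,P10,P11,P12,P13,P14,P15,P16])
  · intro hchsh
    obtain ⟨hA0, hA1⟩ := hp 0 0
    obtain ⟨hB0, hB1⟩ := hp 0 1
    obtain ⟨hC0, hC1⟩ := hp 1 0
    obtain ⟨hD0, hD1⟩ := hp 1 1
    obtain ⟨c1, c1'⟩ := hchsh 0 1 0 1 (by decide) (by decide)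
    obtain ⟨c2, c2'⟩ := hchsh 0 1 1 0 (by decide) (by decide)
    obtain ⟨c3, c3'⟩ := hchsh 1 0 0 1 (by decide) (by decide)
    obtain ⟨c4, c4'⟩ := hchsh 1 0 1 0 (by decide) (by decide)
    have hT : |4*(p 0 0 + p 0 1 + p 1 0 + p 1 1) - 4| + |4*(p 0 0 - p 0 1 + p 1 0 - p 1 1)|
        + |4*(p 0 0 + p 0 1 - p 1 0 - p 1 1)| + |4*(p 0 0 - p 0 1 - p 1 0 + p 1 1)| ≤ 4 := by
      rcases abs_cases (4*(p 0 0 + p 0 1 + p 1 0 + p 1 1) - 4) with ⟨e1, _⟩ | ⟨e1, _⟩ <;>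
      rcases abs_cases (4*(p 0 0 - p 0 1 + p 1 0 - p 1 1)) with ⟨e2, _⟩ | ⟨e2, _⟩ <;>
      rcases abs_cases (4*(p 0 0 + p 0 1 - p 1 0 - p 1 1)) with ⟨e3, _⟩ | ⟨e3, _⟩ <;>
      rcases abs_cases (4*(p 0 0 - p 0 1 - p 1 0 + p 1 1)) with ⟨e4, _⟩ | ⟨e4, _⟩ <;>
      rw [e1, e2, e3, e4] <;>
      linarith [c1, c1', c2, c2', c3, c3', c4, c4', hA0, hA1, hB0, hB1, hC0, hC1, hD0, hD1]
    refine ⟨bellMu p, ?_, ?_, ?_, ?_⟩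
    · intro h
      unfold bellMu
      cases e00 : h 0 0 <;> cases e01 : h 0 1 <;> cases e10 : h 1 0 <;> cases e11 : h 1 1 <;>
        simp only [sgn, e00, e01, e10, e11, if_true, if_false, Bool.false_eq_true] <;>
        unfold bellU bellV bellW <;>
        linarith [hT,
          le_abs_self (4*(p 0 0 + p 0 1 + p 1 0 + p 1 1) - 4),
          neg_abs_le (4*(p 0 0 + p 0 1 + p 1 0 + p 1 1) - 4),
          abs_nonneg (4*(p 0 0 + p 0 1 + p 1 0 + p 1 1) - 4),
          le_abs_self (4*(p 0 0 - p 0 1 + p 1 0 - p 1 1)),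
          neg_abs_le (4*(p 0 0 - p 0 1 + p 1 0 - p 1 1)),
          abs_nonneg (4*(p 0 0 - p 0 1 + p 1 0 - p 1 1)),
          le_abs_self (4*(p 0 0 + p 0 1 - p 1 0 - p 1 1)),
          neg_abs_le (4*(p 0 0 + p 0 1 - p 1 0 - p 1 1)),
          abs_nonneg (4*(p 0 0 + p 0 1 - p 1 0 - p 1 1)),
          le_abs_self (4*(p 0 0 - p 0 1 - p 1 0 + p 1 1)),
          neg_abs_le (4*(p 0 0 - p 0 1 - p 1 0 + p 1 1)),
          abs_nonneg (4*(p 0 0 - p 0 1 - p 1 0 + p 1 1))]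
    · rw [sum_expand]
      simp only [Fintype.sum_bool]
      unfold bellMu
      norm_num [sgn]
      ring
    · intro k i
      fin_cases k <;> fin_cases i <;>
      · rw [Finset.sum_filter, sum_expand]
        simp only [Fintype.sum_bool]
        unfold bellMu
        norm_num [sgn]
        ring
    · intro i j
      fin_cases i <;> fin_cases j <;>
      · rw [Finset.sum_filter, sum_expand]
        simp only [Fintype.sum_bool]
        unfold bellMu
        norm_num [sgn]
        ring
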